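/- arXiv:2104.02677 — 6 statements merged into one kernel-verified Lean document; each statement's English description precedes it below -/
import Mathlib

section
/- (Soundness, item 1, right time robustness.) For every STL formula φ, every signal x : {0,…,H} → ℝⁿ, and every time t ∈ {0,…,H}: if the right time robustness satisfies θ⁺_φ(x,t) > 0, then the characteristic function satisfies χ_φ(x,t) = +1 (i.e., x satisfies φ at time t). -/
namespace STLTime

/-- STL formulas over states in `ℝⁿ`: predicates `μ(x) ≥ 0`, negation,
conjunction, and bounded Until `U_[a,b]` with `a ≤ b`. -/
inductive STL (n : ℕ) : Type where
  | pred : ((Fin n → ℝ) → ℝ) → STL n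
  | not  : STL n → STL n
  | and  : STL n → STL n → STL n
  | untl : (a b : ℕ) → a ≤ b → STL n → STL n → STL n

/-- Characteristic function `χ_φ(x,t) ∈ {-1,+1}` over horizon `H`. -/
noncomputable def chi {n : ℕ} (H : ℕ) (x : ℕ → Fin n → ℝ) : STL n → ℕ → ℤ
  | .pred μ, t => if 0 ≤ μ (x t) then 1 else -1
  | .not φ, t => - chi H x φ t
  | .and φ₁ φ₂, t => min (chi H x φ₁ t) (chi H x φ₂ t)
  | .untl a b _ φ₁ φ₂, t =>
      if h : (Finset.Icc (t + a) (min (t + b) H)).Nonempty then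
        (Finset.Icc (t + a) (min (t + b) H)).sup' h fun t' =>
          (Finset.Ico t t').fold min (chi H x φ₂ t') fun t'' => chi H x φ₁ t''
      else -1

/-- Right time robustness `θ⁺_φ(x,t)` over horizon `H`. -/
noncomputable def thetaPlus {n : ℕ} (H : ℕ) (x : ℕ → Fin n → ℝ) : STL n → ℕ → ℤ
  | .pred μ, t =>
      chi H x (.pred μ) t *
        ((sSup {τ : ℕ | t + τ ≤ H ∧
            ∀ t' ∈ Set.Icc t (t + τ),
              chi H x (.pred μ) t' = chi H x (.pred μ) t} : ℕ) : ℤ)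
  | .not φ, t => - thetaPlus H x φ t
  | .and φ₁ φ₂, t => min (thetaPlus H x φ₁ t) (thetaPlus H x φ₂ t)
  | .untl a b _ φ₁ φ₂, t =>
      if h : (Finset.Icc (t + a) (min (t + b) H)).Nonempty then
        (Finset.Icc (t + a) (min (t + b) H)).sup' h fun t' =>
          (Finset.Ico t t').fold min (thetaPlus H x φ₂ t') fun t'' => thetaPlus H x φ₁ t''
      else -1

/-- Left time robustness `θ⁻_φ(x,t)` over horizon `H`. -/
noncomputable def thetaMinus {n : ℕ} (H : ℕ) (x : ℕ → Fin n → ℝ) : STL n → ℕ → ℤ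
  | .pred μ, t =>
      chi H x (.pred μ) t *
        ((sSup {τ : ℕ | τ ≤ t ∧
            ∀ t' ∈ Set.Icc (t - τ) t,
              chi H x (.pred μ) t' = chi H x (.pred μ) t} : ℕ) : ℤ)
  | .not φ, t => - thetaMinus H x φ t
  | .and φ₁ φ₂, t => min (thetaMinus H x φ₁ t) (thetaMinus H x φ₂ t)
  | .untl a b _ φ₁ φ₂, t =>
      if h : (Finset.Icc (t + a) (min (t + b) H)).Nonempty then
        (Finset.Icc (t + a) (min (t + b) H)).sup' h fun t' =>
          (Finset.Ico t t').fold min (thetaMinus H x φ₂ t') fun t'' => thetaMinus H x φ₁ t''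
      else -1


lemma chi_bdd {n H : ℕ} (x : ℕ → Fin n → ℝ) : ∀ (φ : STL n) (t : ℕ),
    -1 ≤ chi H x φ t ∧ chi H x φ t ≤ 1 := by
  intro φ
  induction φ with
  | pred μ => intro t; simp only [chi]; split <;> omega
  | not φ ih => intro t; have := ih t; simp only [chi]; omega
  | and φ₁ φ₂ ih₁ ih₂ =>
      intro t
      obtain ⟨h1, h2⟩ := ih₁ t
      obtain ⟨h3, h4⟩ := ih₂ t
      exact ⟨le_min h1 h3, (min_le_left _ _).trans h2⟩
  | untl a b hab φ₁ φ₂ ih₁ ih₂ =>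
      intro t
      simp only [chi]
      split
      · next hne =>
          constructor
          · refine (Finset.le_sup' _ hne.choose_spec).trans' ?_
            rw [Finset.le_fold_min]
            exact ⟨(ih₂ _).1, fun s _ => (ih₁ s).1⟩
          · refine Finset.sup'_le _ _ fun s _ => ?_
            rw [Finset.fold_min_le]
            exact Or.inl (ih₂ s).2
      · omega

lemma key {n H : ℕ} (x : ℕ → Fin n → ℝ) : ∀ (φ : STL n), ∀ t ≤ H,
    (0 < thetaPlus H x φ t → chi H x φ t = 1) ∧
    (thetaPlus H x φ t < 0 → chi H x φ t = -1) := by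
  intro φ
  induction φ with
  | pred μ =>
      intro t ht
      simp only [thetaPlus]
      have hτ : (0:ℤ) ≤ ((sSup {τ : ℕ | t + τ ≤ H ∧
          ∀ t' ∈ Set.Icc t (t + τ),
            chi H x (.pred μ) t' = chi H x (.pred μ) t} : ℕ) : ℤ) := Int.natCast_nonneg _
      have hc : chi H x (.pred μ) t = 1 ∨ chi H x (.pred μ) t = -1 := by
        simp only [chi]; split <;> simp
      constructor <;> intro h <;> rcases hc with h1 | h1 <;> rw [h1] at h ⊢ <;> omega
  | not φ ih =>
      intro t ht
      have := ih t ht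
      simp only [thetaPlus, chi]
      constructor <;> intro h
      · rw [this.2 (by omega)]; ring
      · rw [this.1 (by omega)]
  | and φ₁ φ₂ ih₁ ih₂ =>
      intro t ht
      have h1 := ih₁ t ht
      have h2 := ih₂ t ht
      have b1 := chi_bdd (H := H) x φ₁ t
      have b2 := chi_bdd (H := H) x φ₂ t
      simp only [thetaPlus, chi, lt_min_iff, min_lt_iff]
      constructor <;> intro h
      · rw [h1.1 h.1, h2.1 h.2]; exact min_self 1
      · rcases h with h | h
        · rw [h1.2 h]; omega
        · rw [h2.2 h]; omega
  | untl a b hab φ₁ φ₂ ih₁ ih₂ =>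
      intro t ht
      simp only [thetaPlus, chi]
      split
      · next hne =>
          constructor
          · intro h
            rw [Finset.lt_sup'_iff] at h
            obtain ⟨t', ht', hf⟩ := h
            have ht'H : t' ≤ H := (Finset.mem_Icc.mp ht').2.trans (min_le_right _ _)
            replace hf : 1 ≤ (Finset.Ico t t').fold min (thetaPlus H x φ₂ t')
                (fun t'' => thetaPlus H x φ₁ t'') := by
              have := Int.lt_iff_add_one_le.mp hf; linarith
            rw [Finset.le_fold_min] at hf
            obtain ⟨hb, hall⟩ := hf
            have hχ₂ : chi H x φ₂ t' = 1 := (ih₂ t' ht'H).1 (by omega)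
            have hχ₁ : ∀ t'' ∈ Finset.Ico t t', chi H x φ₁ t'' = 1 := fun t'' htt =>
              (ih₁ t'' ((Finset.mem_Ico.mp htt).2.le.trans ht'H)).1
                (by have := hall t'' htt; omega)
            refine le_antisymm (Finset.sup'_le _ _ fun s _ => ?_) ?_
            · rw [Finset.fold_min_le]
              exact Or.inl (chi_bdd (H := H) x φ₂ s).2
            · refine (Finset.le_sup' _ ht').trans' ?_
              rw [Finset.le_fold_min]
              exact ⟨le_of_eq hχ₂.symm, fun s hs => le_of_eq (hχ₁ s hs).symm⟩
          · intro h
            rw [Finset.sup'_lt_iff] at h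
            refine le_antisymm (Finset.sup'_le _ _ fun t' ht' => ?_) ?_
            · have ht'H : t' ≤ H := (Finset.mem_Icc.mp ht').2.trans (min_le_right _ _)
              have hf := h t' ht'
              have hf' : (Finset.Ico t t').fold min (thetaPlus H x φ₂ t')
                  (fun t'' => thetaPlus H x φ₁ t'') ≤ -1 := by
                have := Int.lt_iff_add_one_le.mp hf; linarith
              rw [Finset.fold_min_le] at hf'
              rw [Finset.fold_min_le]
              rcases hf' with hb | ⟨s, hs, hss⟩
              · exact Or.inl ((ih₂ t' ht'H).2 (by omega)).le
              · exact Or.inr ⟨s, hs,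
                  ((ih₁ s ((Finset.mem_Ico.mp hs).2.le.trans ht'H)).2 (by omega)).le⟩
            · refine (Finset.le_sup' _ hne.choose_spec).trans' ?_
              rw [Finset.le_fold_min]
              exact ⟨(chi_bdd (H := H) x φ₂ _).1, fun s _ => (chi_bdd (H := H) x φ₁ s).1⟩
      · exact ⟨fun h => absurd h (by omega), fun _ => rfl⟩


/-- Soundness, item 1, right time robustness: `θ⁺_φ(x,t) > 0 → χ_φ(x,t) = +1`. -/
theorem soundness_right_pos {n H : ℕ} (φ : STL n) (x : ℕ → Fin n → ℝ)
    (t : ℕ) (ht : t ≤ H) (h : 0 < thetaPlus H x φ t) :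
    chi H x φ t = 1 := by
  exact (key x φ t ht).1 h

end STLTime
end

section
/- (Soundness, item 2, right time robustness.) For every STL formula φ, every signal x : {0,…,H} → ℝⁿ, and every time t ∈ {0,…,H}: if the right time robustness satisfies θ⁺_φ(x,t) < 0, then the characteristic function satisfies χ_φ(x,t) = −1 (i.e., x violates φ at time t). -/
namespace STLTime

lemma chi_bounds {n : ℕ} (H : ℕ) (x : ℕ → Fin n → ℝ) (φ : STL n) (t : ℕ) :
    -1 ≤ chi H x φ t ∧ chi H x φ t ≤ 1 := by
  induction φ generalizing t with
  | pred μ => simp only [chi]; split <;> norm_num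
  | not φ ih => simp only [chi]; have := ih t; omega
  | and φ₁ φ₂ ih₁ ih₂ =>
    simp only [chi]
    have h1 := ih₁ t; have h2 := ih₂ t; omega
  | untl a b hab φ₁ φ₂ ih₁ ih₂ =>
    simp only [chi]
    by_cases hne : (Finset.Icc (t + a) (min (t + b) H)).Nonempty
    · rw [dif_pos hne]
      constructor
      · obtain ⟨t', ht'⟩ := hne
        refine le_trans ?_ (Finset.le_sup' _ ht')
        rw [Finset.le_fold_min]
        exact ⟨(ih₂ t').1, fun t'' _ => (ih₁ t'').1⟩
      · apply Finset.sup'_le; intro t' _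
        rw [Finset.fold_min_le]; exact Or.inl (ih₂ t').2
    · rw [dif_neg hne]; norm_num

lemma sound_aux {n H : ℕ} (x : ℕ → Fin n → ℝ) (φ : STL n) :
    ∀ t, t ≤ H → (thetaPlus H x φ t < 0 → chi H x φ t = -1) ∧
      (0 < thetaPlus H x φ t → chi H x φ t = 1) := by
  induction φ with
  | pred μ =>
    intro t ht
    by_cases hμ : 0 ≤ μ (x t)
    · simp only [thetaPlus, chi, if_pos hμ, one_mul]
      exact ⟨fun h => absurd h (not_lt.mpr (Int.natCast_nonneg _)), fun _ => trivial⟩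
    · simp only [thetaPlus, chi, if_neg hμ, neg_one_mul]
      exact ⟨fun _ => trivial,
        fun h => absurd h (not_lt.mpr (neg_nonpos.mpr (Int.natCast_nonneg _)))⟩
  | not φ ih =>
    intro t ht
    obtain ⟨h1, h2⟩ := ih t ht
    simp only [thetaPlus, chi]
    constructor
    · intro h; rw [h2 (by omega)]
    · intro h; rw [h1 (by omega)]; norm_num
  | and φ₁ φ₂ ih₁ ih₂ =>
    intro t ht
    obtain ⟨h1, h2⟩ := ih₁ t ht
    obtain ⟨h3, h4⟩ := ih₂ t ht
    have b1 := chi_bounds H x φ₁ t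
    have b2 := chi_bounds H x φ₂ t
    simp only [thetaPlus, chi]
    constructor
    · intro h
      rcases min_lt_iff.mp h with h' | h'
      · have := h1 h'; omega
      · have := h3 h'; omega
    · intro h
      have hm := lt_min_iff.mp h
      have e1 := h2 hm.1; have e2 := h4 hm.2; omega
  | untl a b hab φ₁ φ₂ ih₁ ih₂ =>
    intro t ht
    simp only [thetaPlus, chi]
    by_cases hne : (Finset.Icc (t + a) (min (t + b) H)).Nonempty
    · rw [dif_pos hne, dif_pos hne]
      constructor
      · intro h
        apply le_antisymm
        · apply Finset.sup'_le
          intro t' ht'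
          have ht'H : t' ≤ H := le_trans (Finset.mem_Icc.mp ht').2 (min_le_right _ _)
          have hθ : ((Finset.Ico t t').fold min (thetaPlus H x φ₂ t')
              fun t'' => thetaPlus H x φ₁ t'') < 0 :=
            lt_of_le_of_lt (Finset.le_sup' (fun t' => (Finset.Ico t t').fold min
              (thetaPlus H x φ₂ t') fun t'' => thetaPlus H x φ₁ t'') ht') h
          have hθ' : ((Finset.Ico t t').fold min (thetaPlus H x φ₂ t')
              fun t'' => thetaPlus H x φ₁ t'') ≤ -1 := by omega
          rcases (Finset.fold_min_le (-1)).mp hθ' with hb | ⟨t'', ht'', hf⟩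
          · have := (ih₂ t' ht'H).1 (by omega)
            rw [Finset.fold_min_le]; exact Or.inl (by omega)
          · have ht''H : t'' ≤ H := by
              have := Finset.mem_Ico.mp ht''; omega
            have := (ih₁ t'' ht''H).1 (by omega)
            rw [Finset.fold_min_le]; exact Or.inr ⟨t'', ht'', by omega⟩
        · obtain ⟨t', ht'⟩ := hne
          refine le_trans ?_ (Finset.le_sup' _ ht')
          rw [Finset.le_fold_min]
          exact ⟨(chi_bounds H x φ₂ t').1, fun t'' _ => (chi_bounds H x φ₁ t'').1⟩
      · intro h
        rw [Finset.lt_sup'_iff] at h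
        obtain ⟨t', ht', hθ⟩ := h
        have ht'H : t' ≤ H := le_trans (Finset.mem_Icc.mp ht').2 (min_le_right _ _)
        have h1 : (1:ℤ) ≤ (Finset.Ico t t').fold min (thetaPlus H x φ₂ t')
            fun t'' => thetaPlus H x φ₁ t'' := by omega
        rw [Finset.le_fold_min] at h1
        obtain ⟨hb, hf⟩ := h1
        have hc2 := (ih₂ t' ht'H).2 (by omega)
        apply le_antisymm
        · apply Finset.sup'_le
          intro s _
          rw [Finset.fold_min_le]
          exact Or.inl (chi_bounds H x φ₂ s).2
        · refine le_trans ?_ (Finset.le_sup' _ ht')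
          rw [Finset.le_fold_min]
          refine ⟨by omega, fun t'' ht'' => ?_⟩
          have ht''H : t'' ≤ H := by
            have := Finset.mem_Ico.mp ht''; omega
          have := (ih₁ t'' ht''H).2 (by have := hf t'' ht''; omega)
          omega
    · rw [dif_neg hne, dif_neg hne]
      exact ⟨fun _ => rfl, fun h => absurd h (by norm_num)⟩

/-- Soundness, item 2, right time robustness: `θ⁺_φ(x,t) < 0 → χ_φ(x,t) = -1`. -/
theorem soundness_right_neg {n H : ℕ} (φ : STL n) (x : ℕ → Fin n → ℝ)
    (t : ℕ) (ht : t ≤ H) (h : thetaPlus H x φ t < 0) :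
    chi H x φ t = -1 := (sound_aux x φ t ht).1 h

end STLTime
end

section
/- (Soundness, item 3, right time robustness.) For every STL formula φ, every signal x : {0,…,H} → ℝⁿ, and every time t ∈ {0,…,H}: if the characteristic function satisfies χ_φ(x,t) = +1, then the right time robustness satisfies θ⁺_φ(x,t) ≥ 0. -/
namespace STLTime

theorem soundness_aux {n H : ℕ} (x : ℕ → Fin n → ℝ) (φ : STL n) :
    ∀ t : ℕ, t ≤ H →
      (1 ≤ chi H x φ t → 0 ≤ thetaPlus H x φ t) ∧
      (chi H x φ t ≤ -1 → thetaPlus H x φ t ≤ 0) := by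
  induction φ with
  | pred μ =>
      intro t ht
      have hnn : (0 : ℤ) ≤ ((sSup {τ : ℕ | t + τ ≤ H ∧
          ∀ t' ∈ Set.Icc t (t + τ),
            chi H x (.pred μ) t' = chi H x (.pred μ) t} : ℕ) : ℤ) :=
        Int.ofNat_nonneg _
      constructor <;> intro h <;> rw [thetaPlus] <;> rw [chi] at h ⊢
      · split at h
        · rw [if_pos ‹_›]; linarith
        · omega
      · split at h
        · omega
        · rw [if_neg ‹_›]; linarith
  | not φ ih =>
      intro t ht
      obtain ⟨h1, h2⟩ := ih t ht
      simp only [chi, thetaPlus]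
      constructor <;> intro h
      · have := h2 (by omega)
        omega
      · have := h1 (by omega)
        omega
  | and φ₁ φ₂ ih₁ ih₂ =>
      intro t ht
      obtain ⟨h1, h2⟩ := ih₁ t ht
      obtain ⟨h1', h2'⟩ := ih₂ t ht
      simp only [chi, thetaPlus]
      constructor <;> intro h
      · rw [le_min_iff] at h ⊢
        exact ⟨h1 h.1, h1' h.2⟩
      · rw [min_le_iff] at h ⊢
        rcases h with h | h
        · exact Or.inl (h2 h)
        · exact Or.inr (h2' h)
  | untl a b hab φ₁ φ₂ ih₁ ih₂ =>
      intro t ht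
      simp only [chi, thetaPlus]
      constructor <;> intro h
      · split at h
        case isFalse => omega
        case isTrue hne =>
          rw [dif_pos hne]
          rw [Finset.le_sup'_iff] at h
          obtain ⟨t', ht', hfold⟩ := h
          have ht'H : t' ≤ H := by
            have := (Finset.mem_Icc.mp ht').2
            omega
          rw [Finset.le_fold_min] at hfold
          refine Finset.le_sup'_of_le _ ht' ?_
          rw [Finset.le_fold_min]
          refine ⟨(ih₂ t' ht'H).1 hfold.1, fun t'' ht'' => ?_⟩
          have ht''H : t'' ≤ H := by
            have := (Finset.mem_Ico.mp ht'').2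
            omega
          exact (ih₁ t'' ht''H).1 (hfold.2 t'' ht'')
      · split at h
        case isFalse hne => rw [dif_neg hne]; omega
        case isTrue hne =>
          rw [dif_pos hne]
          rw [Finset.sup'_le_iff] at h ⊢
          intro t' ht'
          have ht'H : t' ≤ H := by
            have := (Finset.mem_Icc.mp ht').2
            omega
          have hfold := h t' ht'
          rw [Finset.fold_min_le] at hfold ⊢
          rcases hfold with hb | ⟨t'', ht'', hf⟩
          · exact Or.inl ((ih₂ t' ht'H).2 hb)
          · refine Or.inr ⟨t'', ht'', ?_⟩
            have ht''H : t'' ≤ H := by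
              have := (Finset.mem_Ico.mp ht'').2
              omega
            exact (ih₁ t'' ht''H).2 hf

/-- Soundness, item 3, right time robustness: `χ_φ(x,t) = +1 → θ⁺_φ(x,t) ≥ 0`. -/
theorem soundness_right_sat_nonneg {n H : ℕ} (φ : STL n) (x : ℕ → Fin n → ℝ)
    (t : ℕ) (ht : t ≤ H) (h : chi H x φ t = 1) :
    0 ≤ thetaPlus H x φ t :=
  (soundness_aux x φ t ht).1 (by omega)

end STLTime
end

section
/- (Soundness, item 4, right time robustness.) For every STL formula φ, every signal x : {0,…,H} → ℝⁿ, and every time t ∈ {0,…,H}: if the characteristic function satisfies χ_φ(x,t) = −1, then the right time robustness satisfies θ⁺_φ(x,t) ≤ 0. -/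
namespace STLTime

lemma fold_min_mem_pm (s : Finset ℕ) (b : ℤ) (f : ℕ → ℤ)
    (hb : b = 1 ∨ b = -1) (hf : ∀ i ∈ s, f i = 1 ∨ f i = -1) :
    s.fold min b f = 1 ∨ s.fold min b f = -1 := by
  induction s using Finset.induction with
  | empty => simpa using hb
  | @insert a s hx ih =>
    rw [Finset.fold_insert hx]
    rcases hf a (Finset.mem_insert_self a s) with h1 | h1 <;>
    rcases ih (fun i hi => hf i (Finset.mem_insert_of_mem hi)) with h2 | h2 <;>
      simp [h1, h2]

lemma chi_pm {n H : ℕ} (x : ℕ → Fin n → ℝ) (φ : STL n) (t : ℕ) :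
    chi H x φ t = 1 ∨ chi H x φ t = -1 := by
  induction φ generalizing t with
  | pred μ => by_cases h : 0 ≤ μ (x t) <;> simp [chi, h]
  | not φ ih => rcases ih t with h | h <;> simp [chi, h]
  | and φ₁ φ₂ ih₁ ih₂ =>
    rcases ih₁ t with h1 | h1 <;> rcases ih₂ t with h2 | h2 <;> simp [chi, h1, h2]
  | untl a b hab φ₁ φ₂ ih₁ ih₂ =>
    rw [chi]
    split
    · rename_i hne
      obtain ⟨t', ht', heq⟩ := Finset.exists_mem_eq_sup' hne
        (fun t' => (Finset.Ico t t').fold min (chi H x φ₂ t') fun t'' => chi H x φ₁ t'')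
      rw [heq]
      exact fold_min_mem_pm _ _ _ (ih₂ t') (fun i _ => ih₁ i)
    · right; rfl

lemma aux_sound {n H : ℕ} (x : ℕ → Fin n → ℝ) (φ : STL n) :
    ∀ t : ℕ, t ≤ H →
      (chi H x φ t = -1 → thetaPlus H x φ t ≤ 0) ∧
      (chi H x φ t = 1 → 0 ≤ thetaPlus H x φ t) := by
  induction φ with
  | pred μ =>
    intro t _
    constructor <;> intro h <;> rw [thetaPlus, h] <;> omega
  | not φ ih =>
    intro t ht
    obtain ⟨h1, h2⟩ := ih t ht
    constructor <;> intro h <;> rw [thetaPlus] <;> rw [chi] at h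
    · have : chi H x φ t = 1 := by omega
      linarith [h2 this]
    · have : chi H x φ t = -1 := by omega
      linarith [h1 this]
  | and φ₁ φ₂ ih₁ ih₂ =>
    intro t ht
    obtain ⟨h1, h2⟩ := ih₁ t ht
    obtain ⟨h3, h4⟩ := ih₂ t ht
    constructor <;> intro h <;> rw [thetaPlus] <;> rw [chi] at h
    · rcases chi_pm (H := H) x φ₁ t with hc | hc
      · have hc2 : chi H x φ₂ t = -1 := by
          rcases chi_pm (H := H) x φ₂ t with h2' | h2' <;> omega
        exact le_trans (min_le_right _ _) (h3 hc2)
      · exact le_trans (min_le_left _ _) (h1 hc)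
    · have hc1 : chi H x φ₁ t = 1 := by rcases chi_pm (H := H) x φ₁ t with hc | hc <;> omega
      have hc2 : chi H x φ₂ t = 1 := by rcases chi_pm (H := H) x φ₂ t with hc | hc <;> omega
      exact le_min (h2 hc1) (h4 hc2)
  | untl a b hab φ₁ φ₂ ih₁ ih₂ =>
    intro t ht
    constructor <;> intro h <;> rw [thetaPlus] <;> rw [chi] at h
    · split
      · rename_i hne
        rw [dif_pos hne] at h
        rw [Finset.sup'_le_iff]
        intro t' ht'
        have hle := Finset.le_sup'
          (fun t' => (Finset.Ico t t').fold min (chi H x φ₂ t') fun t'' => chi H x φ₁ t'') ht'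
        rw [h] at hle
        have ht'H : t' ≤ H := le_trans (Finset.mem_Icc.mp ht').2 (min_le_right _ _)
        rw [Finset.fold_min_le] at hle
        rw [Finset.fold_min_le]
        rcases hle with hle | ⟨t'', ht'', hle⟩
        · left
          have hc : chi H x φ₂ t' = -1 := by rcases chi_pm (H := H) x φ₂ t' with hc | hc <;> omega
          exact (ih₂ t' ht'H).1 hc
        · right
          refine ⟨t'', ht'', ?_⟩
          have ht''H : t'' ≤ H := le_trans (le_of_lt (Finset.mem_Ico.mp ht'').2) ht'H
          have hc : chi H x φ₁ t'' = -1 := by rcases chi_pm (H := H) x φ₁ t'' with hc | hc <;> omega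
          exact (ih₁ t'' ht''H).1 hc
      · exact neg_nonpos.mpr zero_le_one
    · split
      · rename_i hne
        rw [dif_pos hne] at h
        obtain ⟨t', ht', heq⟩ := Finset.exists_mem_eq_sup' hne
          (fun t' => (Finset.Ico t t').fold min (chi H x φ₂ t') fun t'' => chi H x φ₁ t'')
        have ht'H : t' ≤ H := le_trans (Finset.mem_Icc.mp ht').2 (min_le_right _ _)
        have hfold : (1:ℤ) ≤ (Finset.Ico t t').fold min (chi H x φ₂ t')
            fun t'' => chi H x φ₁ t'' := by rw [← heq, h]
        rw [Finset.le_fold_min] at hfold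
        obtain ⟨hbase, hall⟩ := hfold
        have hc2 : chi H x φ₂ t' = 1 := by rcases chi_pm (H := H) x φ₂ t' with hc | hc <;> omega
        refine le_trans ?_ (Finset.le_sup'
          (fun t' => (Finset.Ico t t').fold min (thetaPlus H x φ₂ t')
            fun t'' => thetaPlus H x φ₁ t'') ht')
        rw [Finset.le_fold_min]
        refine ⟨(ih₂ t' ht'H).2 hc2, fun t'' ht'' => ?_⟩
        have ht''H : t'' ≤ H := le_trans (le_of_lt (Finset.mem_Ico.mp ht'').2) ht'H
        have h1 := hall t'' ht''
        have hc1 : chi H x φ₁ t'' = 1 := by rcases chi_pm (H := H) x φ₁ t'' with hc | hc <;> omega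
        exact (ih₁ t'' ht''H).2 hc1
      · rename_i hne
        rw [dif_neg hne] at h
        omega

/-- Soundness, item 4, right time robustness: `χ_φ(x,t) = -1 → θ⁺_φ(x,t) ≤ 0`. -/
theorem soundness_right_viol_nonpos {n H : ℕ} (φ : STL n) (x : ℕ → Fin n → ℝ)
    (t : ℕ) (ht : t ≤ H) (h : chi H x φ t = -1) :
    thetaPlus H x φ t ≤ 0 := by
  exact (aux_sound x φ t ht).1 h

end STLTime
end

section
/- (Soundness, item 1, left time robustness.) For every STL formula φ, every signal x : {0,…,H} → ℝⁿ, and every time t ∈ {0,…,H}: if the left time robustness satisfies θ⁻_φ(x,t) > 0, then the characteristic function satisfies χ_φ(x,t) = +1. -/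
namespace STLTime

lemma fold_min_chi_mem {n H : ℕ} (x : ℕ → Fin n → ℝ) (φ₁ φ₂ : STL n)
    (ih₁ : ∀ t, chi H x φ₁ t = 1 ∨ chi H x φ₁ t = -1)
    (ih₂ : ∀ t, chi H x φ₂ t = 1 ∨ chi H x φ₂ t = -1) (t t' : ℕ) :
    (Finset.Ico t t').fold min (chi H x φ₂ t') (fun t'' => chi H x φ₁ t'') = 1 ∨
    (Finset.Ico t t').fold min (chi H x φ₂ t') (fun t'' => chi H x φ₁ t'') = -1 := by
  induction (Finset.Ico t t') using Finset.induction with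
  | empty => simpa using ih₂ t'
  | @insert c s hnm ih =>
      rw [Finset.fold_insert hnm]
      rcases ih₁ c with h1 | h1 <;> rcases ih with h2 | h2 <;> rw [h1, h2] <;> simp

lemma chi_mem {n H : ℕ} (x : ℕ → Fin n → ℝ) (φ : STL n) :
    ∀ t, chi H x φ t = 1 ∨ chi H x φ t = -1 := by
  induction φ with
  | pred μ => intro t; unfold chi; split <;> simp
  | not φ ih => intro t; unfold chi; rcases ih t with h | h <;> simp [h]
  | and φ₁ φ₂ ih₁ ih₂ =>
      intro t; unfold chi
      rcases ih₁ t with h1 | h1 <;> rcases ih₂ t with h2 | h2 <;> simp [h1, h2]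
  | untl a b hab φ₁ φ₂ ih₁ ih₂ =>
      intro t; unfold chi
      split
      · rename_i hne
        have := Finset.sup'_mem ({1, -1} : Set ℤ)
          (by rintro p (hp | hp) q (hq | hq) <;> subst hp <;> subst hq <;> simp)
          (Finset.Icc (t + a) (min (t + b) H)) hne
          (fun t' => (Finset.Ico t t').fold min (chi H x φ₂ t') (fun t'' => chi H x φ₁ t''))
          (fun i _ => by
            rcases fold_min_chi_mem x φ₁ φ₂ ih₁ ih₂ t i with h | h <;> simp [h])
        simpa using this
      · right; rfl

lemma chi_le_one {n H : ℕ} (x : ℕ → Fin n → ℝ) (φ : STL n) (t : ℕ) :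
    chi H x φ t ≤ 1 := by
  rcases chi_mem (H := H) x φ t with h | h <;> rw [h] <;> norm_num

lemma neg_one_le_chi {n H : ℕ} (x : ℕ → Fin n → ℝ) (φ : STL n) (t : ℕ) :
    -1 ≤ chi H x φ t := by
  rcases chi_mem (H := H) x φ t with h | h <;> rw [h] <;> norm_num

lemma soundness_both {n H : ℕ} (φ : STL n) (x : ℕ → Fin n → ℝ) :
    ∀ t, (0 < thetaMinus H x φ t → chi H x φ t = 1) ∧
         (thetaMinus H x φ t < 0 → chi H x φ t = -1) := by
  induction φ with
  | pred μ =>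
      intro t
      constructor <;> intro h <;> unfold thetaMinus at h
      · rcases chi_mem (H := H) x (.pred μ) t with hc | hc
        · exact hc
        · exfalso; rw [hc] at h; omega
      · rcases chi_mem (H := H) x (.pred μ) t with hc | hc
        · exfalso; rw [hc] at h; omega
        · exact hc
  | not φ ih =>
      intro t
      unfold thetaMinus chi
      constructor <;> intro h
      · rw [(ih t).2 (by omega)]; norm_num
      · rw [(ih t).1 (by omega)]
  | and φ₁ φ₂ ih₁ ih₂ =>
      intro t
      unfold thetaMinus chi
      constructor <;> intro h
      · rw [lt_min_iff] at h
        rw [(ih₁ t).1 h.1, (ih₂ t).1 h.2]; rfl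
      · rw [min_lt_iff] at h
        rcases h with h | h
        · rw [(ih₁ t).2 h]
          have := chi_le_one (H := H) x φ₂ t
          have := neg_one_le_chi (H := H) x φ₂ t
          omega
        · rw [(ih₂ t).2 h]
          have := chi_le_one (H := H) x φ₁ t
          have := neg_one_le_chi (H := H) x φ₁ t
          omega
  | untl a b hab φ₁ φ₂ ih₁ ih₂ =>
      intro t
      unfold thetaMinus chi
      by_cases hne : (Finset.Icc (t + a) (min (t + b) H)).Nonempty
      · rw [dif_pos hne, dif_pos hne]
        constructor <;> intro h
        · rw [Finset.lt_sup'_iff] at h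
          obtain ⟨t', ht', hfold⟩ := h
          have hfold' : (1 : ℤ) ≤ (Finset.Ico t t').fold min (thetaMinus H x φ₂ t')
              (fun t'' => thetaMinus H x φ₁ t'') := by omega
          rw [Finset.le_fold_min] at hfold'
          have h2 : chi H x φ₂ t' = 1 := (ih₂ t').1 (by omega)
          have h1 : ∀ t'' ∈ Finset.Ico t t', chi H x φ₁ t'' = 1 := fun t'' ht'' =>
            (ih₁ t'').1 (by have := hfold'.2 t'' ht''; omega)
          apply le_antisymm
          · exact Finset.sup'_le _ _ fun i _ =>
              (Finset.fold_min_le _).mpr (Or.inl (chi_le_one x φ₂ i))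
          · apply Finset.le_sup'_of_le _ ht'
            rw [Finset.le_fold_min]
            exact ⟨by omega, fun s hs => by rw [h1 s hs]⟩
        · rw [Finset.sup'_lt_iff] at h
          apply le_antisymm
          · apply Finset.sup'_le
            intro t' ht'
            have hlt := h t' ht'
            have hle : (Finset.Ico t t').fold min (thetaMinus H x φ₂ t')
                (fun t'' => thetaMinus H x φ₁ t'') ≤ -1 := by omega
            rw [Finset.fold_min_le] at hle
            rcases hle with hb | ⟨s, hs, hsle⟩
            · have h2 : chi H x φ₂ t' = -1 := (ih₂ t').2 (by omega)
              exact (Finset.fold_min_le _).mpr (Or.inl (by omega))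
            · have h1 : chi H x φ₁ s = -1 := (ih₁ s).2 (by omega)
              exact (Finset.fold_min_le _).mpr (Or.inr ⟨s, hs, by omega⟩)
          · obtain ⟨c, hc⟩ := hne
            apply Finset.le_sup'_of_le _ hc
            rw [Finset.le_fold_min]
            exact ⟨neg_one_le_chi x φ₂ c, fun s _ => neg_one_le_chi x φ₁ s⟩
      · rw [dif_neg hne, dif_neg hne]
        exact ⟨fun h => absurd h (by norm_num), fun _ => rfl⟩

/-- Soundness, item 1, left time robustness: `θ⁻_φ(x,t) > 0 → χ_φ(x,t) = +1`. -/
theorem soundness_left_pos {n H : ℕ} (φ : STL n) (x : ℕ → Fin n → ℝ)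
    (t : ℕ) (ht : t ≤ H) (h : 0 < thetaMinus H x φ t) :
    chi H x φ t = 1 := (soundness_both φ x t).1 h

end STLTime
end

section
/- (MILP encoding of predicate right time robustness.) Fix a horizon H ∈ ℕ, a signal x : {0,…,H} → ℝⁿ, and an atomic predicate p with function μ_p : ℝⁿ → ℝ. Define z : {0,…,H} → {0,1} by z_t = 1 if μ_p(x_t) ≥ 0 and z_t = 0 otherwise, and define c¹, c⁰ : {0,…,H+1} → ℤ backwards by c¹_{H+1} = 0, c¹_t = (c¹_{t+1} + 1)·z_t, and c⁰_{H+1} = 0, c⁰_t = (c⁰_{t+1} − 1)·(1 − z_t). Then for every t ∈ {0,…,H}, the right time robustness satisfies θ⁺_p(x,t) = c¹_t + c⁰_t − (2·z_t − 1). -/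
namespace STLTime

/-- The set whose supremum defines predicate right time robustness. -/
def predSet {n : ℕ} (H : ℕ) (x : ℕ → Fin n → ℝ) (μ : (Fin n → ℝ) → ℝ) (t : ℕ) : Set ℕ :=
  {τ : ℕ | t + τ ≤ H ∧
      ∀ t' ∈ Set.Icc t (t + τ), chi H x (.pred μ) t' = chi H x (.pred μ) t}

lemma pred_zero_mem {n H : ℕ} (x : ℕ → Fin n → ℝ) (μ : (Fin n → ℝ) → ℝ)
    {t : ℕ} (ht : t ≤ H) : 0 ∈ predSet H x μ t := by
  refine ⟨by simpa using ht, ?_⟩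
  intro t' ht'
  rw [Set.mem_Icc] at ht'
  have : t' = t := by omega
  rw [this]

lemma pred_bdd {n H : ℕ} (x : ℕ → Fin n → ℝ) (μ : (Fin n → ℝ) → ℝ)
    (t : ℕ) : BddAbove (predSet H x μ t) :=
  ⟨H, fun τ hτ => by have := hτ.1; omega⟩

lemma predSup_eq_zero {n H : ℕ} (x : ℕ → Fin n → ℝ) (μ : (Fin n → ℝ) → ℝ)
    {t : ℕ} (ht : t ≤ H)
    (h : t = H ∨ chi H x (.pred μ) (t + 1) ≠ chi H x (.pred μ) t) :
    sSup (predSet H x μ t) = 0 := by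
  have hset : predSet H x μ t = {0} := by
    ext τ
    simp only [Set.mem_singleton_iff]
    constructor
    · rintro ⟨h1, h2⟩
      by_contra hτ
      rcases h with rfl | hne
      · omega
      · exact hne (h2 (t + 1) (Set.mem_Icc.mpr ⟨by omega, by omega⟩))
    · rintro rfl; exact pred_zero_mem x μ ht
  rw [hset, csSup_singleton]

lemma predSup_succ {n H : ℕ} (x : ℕ → Fin n → ℝ) (μ : (Fin n → ℝ) → ℝ)
    {t : ℕ} (ht : t < H)
    (heq : chi H x (.pred μ) (t + 1) = chi H x (.pred μ) t) :
    sSup (predSet H x μ t) = sSup (predSet H x μ (t + 1)) + 1 := by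
  have hne1 : (predSet H x μ (t + 1)).Nonempty := ⟨0, pred_zero_mem x μ ht⟩
  have hmem : sSup (predSet H x μ (t + 1)) ∈ predSet H x μ (t + 1) :=
    Nat.sSup_mem hne1 (pred_bdd x μ (t + 1))
  apply le_antisymm
  · apply csSup_le ⟨0, pred_zero_mem x μ ht.le⟩
    intro τ hτ
    match τ with
    | 0 => omega
    | σ + 1 =>
      have hσ : σ ∈ predSet H x μ (t + 1) := by
        refine ⟨by have := hτ.1; omega, ?_⟩
        intro t' ht'
        rw [Set.mem_Icc] at ht'
        rw [hτ.2 t' (Set.mem_Icc.mpr ⟨by omega, by omega⟩), heq]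
      have := le_csSup (pred_bdd x μ (t + 1)) hσ
      omega
  · apply le_csSup (pred_bdd x μ t)
    refine ⟨by have := hmem.1; omega, ?_⟩
    intro t' ht'
    rw [Set.mem_Icc] at ht'
    rcases Nat.eq_or_lt_of_le ht'.1 with h | h
    · rw [← h]
    · rw [← heq]
      exact hmem.2 t' (Set.mem_Icc.mpr ⟨by omega, by omega⟩)

/-- MILP encoding of predicate right time robustness:
`θ⁺_p(x,t) = c¹_t + c⁰_t - (2 z_t - 1)`. -/
theorem milp_pred_encoding {n H : ℕ} (μ : (Fin n → ℝ) → ℝ) (x : ℕ → Fin n → ℝ)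
    (z : ℕ → ℤ) (hz : ∀ t, z t = if 0 ≤ μ (x t) then 1 else 0)
    (c1 c0 : ℕ → ℤ)
    (hc1H : c1 (H + 1) = 0) (hc1 : ∀ t ≤ H, c1 t = (c1 (t + 1) + 1) * z t)
    (hc0H : c0 (H + 1) = 0) (hc0 : ∀ t ≤ H, c0 t = (c0 (t + 1) - 1) * (1 - z t)) :
    ∀ t ≤ H, thetaPlus H x (.pred μ) t = c1 t + c0 t - (2 * z t - 1) := by
  have hz01 : ∀ t, z t = 0 ∨ z t = 1 := by
    intro t; rw [hz]; by_cases h : 0 ≤ μ (x t) <;> simp [h]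
  have hχ : ∀ t, chi H x (.pred μ) t = 2 * z t - 1 := by
    intro t
    rw [hz]
    by_cases h : 0 ≤ μ (x t) <;> simp [chi, h]
  have hχiff : ∀ s t, chi H x (.pred μ) s = chi H x (.pred μ) t ↔ z s = z t := by
    intro s t; rw [hχ, hχ]; omega
  -- key invariant, by backwards induction
  have key : ∀ d t, t ≤ H → H - t = d →
      c1 t = (if z t = 1 then ((sSup (predSet H x μ t) : ℕ) : ℤ) + 1 else 0) ∧
      c0 t = (if z t = 1 then 0 else -(((sSup (predSet H x μ t) : ℕ) : ℤ) + 1)) := by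
    intro d
    induction d with
    | zero =>
      intro t ht hd
      have htH : t = H := by omega
      have hN : sSup (predSet H x μ t) = 0 := predSup_eq_zero x μ ht (Or.inl htH)
      rw [hN, hc1 t ht, hc0 t ht, htH, hc1H, hc0H]
      rcases hz01 H with h | h <;> simp [h]
    | succ d ih =>
      intro t ht hd
      have htH : t < H := by omega
      obtain ⟨ih1, ih0⟩ := ih (t + 1) (by omega) (by omega)
      rw [hc1 t ht, hc0 t ht]
      by_cases hzz : z (t + 1) = z t
      · have hN : sSup (predSet H x μ t) = sSup (predSet H x μ (t + 1)) + 1 :=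
          predSup_succ x μ htH ((hχiff (t + 1) t).mpr hzz)
        rw [hN, ih1, ih0, hzz]
        rcases hz01 t with h | h <;> simp [h] <;> push_cast <;> ring
      · have hN : sSup (predSet H x μ t) = 0 :=
          predSup_eq_zero x μ ht (Or.inr (fun h => hzz ((hχiff (t + 1) t).mp h)))
        rw [hN, ih1, ih0]
        rcases hz01 t with h | h <;> rcases hz01 (t + 1) with h' | h' <;>
          simp [h, h'] at hzz ⊢
  intro t ht
  obtain ⟨k1, k0⟩ := key (H - t) t ht rfl
  have hth : thetaPlus H x (.pred μ) t =
      chi H x (.pred μ) t * ((sSup (predSet H x μ t) : ℕ) : ℤ) := by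
    simp [thetaPlus, predSet]
  rw [hth, k1, k0, hχ]
  rcases hz01 t with h | h <;> simp [h] <;> ring

end STLTime
end
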